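/- arXiv:2602.04310 — 8 statements merged into one kernel-verified Lean document; each statement's English description precedes it below -/
import Mathlib

section
/- Suppose W : ℝⁿ → ℝ≥0 satisfies W(x) ≤ c(x) + max_{i ∈ ⟨M⟩} W(f_i(x)) for all x, W is continuous at 0 with W(0) = 0, and every trajectory of the switched system converges to 0. Then W(x) ≤ J(x) for all x ∈ ℝⁿ. -/
open scoped ENNReal
open Filter

/-- Trajectory of the switched system `x_{k+1} = f_{σ(k)}(x_k)` starting at `x`. -/
def traj {n M : ℕ} (f : Fin M → (Fin n → ℝ) → (Fin n → ℝ))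
    (σ : ℕ → Fin M) (x : Fin n → ℝ) : ℕ → (Fin n → ℝ)
  | 0 => x
  | k + 1 => f (σ k) (traj f σ x k)

/-- Worst-case value function `J(x) = sup_σ ∑_k c(ξ(k,x,σ))`, valued in `[0,∞]`. -/
noncomputable def valueFun {n M : ℕ} (f : Fin M → (Fin n → ℝ) → (Fin n → ℝ))
    (c : (Fin n → ℝ) → ℝ) (x : Fin n → ℝ) : ℝ≥0∞ :=
  ⨆ σ : ℕ → Fin M, ∑' k : ℕ, ENNReal.ofReal (c (traj f σ x k))

/-!
Follow the greedy switching signal, which at every state picks a mode maximising `W` at the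
successor. Along its trajectory `ξ` the dynamic-programming inequality gives
`W(ξ_k) ≤ c(ξ_k) + W(ξ_{k+1})`, hence `W(x) ≤ ∑_{k<N} c(ξ_k) + W(ξ_N)` for every `N`; the last
term tends to `W(0) = 0` because `ξ_N → 0` and `W` is continuous at `0`.
-/

open Topology Finset

theorem le_sum_range_add_of_le_add {α : Type*} [AddCommMonoid α] [PartialOrder α]
    [IsOrderedAddMonoid α] {u a : ℕ → α} (h : ∀ k, u k ≤ a k + u (k + 1)) (N : ℕ) :
    u 0 ≤ ∑ k ∈ range N, a k + u N := by
  induction N with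
  | zero => simp
  | succ N ih =>
    calc u 0 ≤ ∑ k ∈ range N, a k + u N := ih
      _ ≤ ∑ k ∈ range N, a k + (a N + u (N + 1)) := by gcongr; exact h N
      _ = ∑ k ∈ range (N + 1), a k + u (N + 1) := by rw [sum_range_succ, add_assoc]

theorem ENNReal.le_tsum_of_le_add_of_tendsto_zero {u a : ℕ → ℝ≥0∞}
    (h : ∀ k, u k ≤ a k + u (k + 1)) (hu : Tendsto u atTop (𝓝 0)) :
    u 0 ≤ ∑' k, a k := by
  have hlim : Tendsto (fun N => ∑' k, a k + u N) atTop (𝓝 (∑' k, a k)) := by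
    simpa using hu.const_add (∑' k, a k)
  refine ge_of_tendsto' hlim fun N => ?_
  calc u 0 ≤ ∑ k ∈ range N, a k + u N := le_sum_range_add_of_le_add h N
    _ ≤ ∑' k, a k + u N := by gcongr; exact ENNReal.sum_le_tsum _

theorem exists_greedy_selector {X ι : Type*} [Finite ι] [Nonempty ι] {f : ι → X → X}
    {c W : X → ℝ} (hDP : ∀ x, W x ≤ c x + ⨆ i, W (f i x)) :
    ∃ φ : X → ι, ∀ x, W x ≤ c x + W (f (φ x) x) := by
  choose φ hφ using fun x => Finite.exists_max fun i => W (f i x)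
  exact ⟨φ, fun x => (hDP x).trans (add_le_add_right (ciSup_le (hφ x)) _)⟩

theorem exists_traj_eq_feedback {n M : ℕ} (f : Fin M → (Fin n → ℝ) → (Fin n → ℝ))
    (φ : (Fin n → ℝ) → Fin M) (x : Fin n → ℝ) :
    ∃ σ : ℕ → Fin M, ∀ k, σ k = φ (traj f σ x k) := by
  set g : (Fin n → ℝ) → (Fin n → ℝ) := fun y => f (φ y) y
  refine ⟨fun k => φ (g^[k] x), fun k => congrArg φ ?_⟩
  induction k with
  | zero => rfl
  | succ k ih => rw [Function.iterate_succ_apply', traj, ← ih]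

theorem stmt_1_general {n M : ℕ} (hM : 0 < M)
    (f : Fin M → (Fin n → ℝ) → (Fin n → ℝ))
    (c W : (Fin n → ℝ) → ℝ)
    (hDP : ∀ x, W x ≤ c x + ⨆ i : Fin M, W (f i x))
    (hcont : ContinuousAt W 0) (hW0 : W 0 = 0)
    (hstab : ∀ (σ : ℕ → Fin M) (x : Fin n → ℝ),
      Tendsto (traj f σ x) atTop (nhds 0)) :
    ∀ x : Fin n → ℝ, ENNReal.ofReal (W x) ≤ valueFun f c x := by
  intro x
  have : Nonempty (Fin M) := ⟨⟨0, hM⟩⟩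
  obtain ⟨φ, hφ⟩ := exists_greedy_selector hDP
  obtain ⟨σ, hσ⟩ := exists_traj_eq_feedback f φ x
  have hstep : ∀ k, ENNReal.ofReal (W (traj f σ x k)) ≤
      ENNReal.ofReal (c (traj f σ x k)) + ENNReal.ofReal (W (traj f σ x (k + 1))) := by
    intro k
    rw [traj, hσ k]
    exact (ENNReal.ofReal_le_ofReal (hφ _)).trans ENNReal.ofReal_add_le
  have hW_traj : Tendsto (fun k => ENNReal.ofReal (W (traj f σ x k))) atTop (𝓝 0) := by
    simpa [hW0] using ENNReal.tendsto_ofReal (hcont.tendsto.comp (hstab σ x))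
  exact (ENNReal.le_tsum_of_le_add_of_tendsto_zero hstep hW_traj).trans
    (le_iSup (fun σ => ∑' k, ENNReal.ofReal (c (traj f σ x k))) σ)

theorem stmt_1 {n M : ℕ} (hM : 0 < M)
    (f : Fin M → (Fin n → ℝ) → (Fin n → ℝ))
    (c W : (Fin n → ℝ) → ℝ)
    (hc : ∀ x, 0 ≤ c x) (hW : ∀ x, 0 ≤ W x)
    (hDP : ∀ x, W x ≤ c x + ⨆ i : Fin M, W (f i x))
    (hcont : ContinuousAt W 0) (hW0 : W 0 = 0)
    (hstab : ∀ (σ : ℕ → Fin M) (x : Fin n → ℝ),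
      Tendsto (traj f σ x) atTop (nhds 0)) :
    ∀ x : Fin n → ℝ, ENNReal.ofReal (W x) ≤ valueFun f c x :=
  stmt_1_general hM f c W hDP hcont hW0 hstab
end

section
/- Let G = (S, E) be a directed labeled graph that is complete for ⟨M⟩ (every node α and label i has an outgoing edge (α,β,i) ∈ E for some β). If nonnegative functions {V_α}_{α∈S} satisfy V_α(x) ≥ c(x) + V_β(f_i(x)) for all x and all edges (α,β,i) ∈ E, then V(x) := min_{α∈S} V_α(x) satisfies V(x) ≥ c(x) + max_{i∈⟨M⟩} V(f_i(x)) for all x, and consequently V(x) ≥ J(x) for all x. -/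
open scoped ENNReal
open Filter

/-!
The edge inequalities pass to `W = min_α V_α`: for any node `α` and mode `i`, completeness gives an
edge `(α, β, i)`, whence `c x + W (f_i x) ≤ c x + V_β (f_i x) ≤ V_α x`. So `W` is a storage function
for every mode at once, and telescoping `c x + W (f_i x) ≤ W x` along a trajectory bounds each
partial cost sum by `W x - W (ξ N) ≤ W x`, because `W ≥ 0`.
-/

theorem add_iInf_le_iInf_of_complete {X S ι : Type*} [Finite S] [Nonempty S]
    {E : Set (S × S × ι)} (hcomplete : ∀ α i, ∃ β, (α, β, i) ∈ E)
    {f : ι → X → X} {c : X → ℝ} {V : S → X → ℝ}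
    (hineq : ∀ α β i, (α, β, i) ∈ E → ∀ x, c x + V β (f i x) ≤ V α x) (i : ι) (x : X) :
    c x + ⨅ α, V α (f i x) ≤ ⨅ α, V α x := by
  refine le_ciInf fun α => ?_
  obtain ⟨β, hβ⟩ := hcomplete α i
  calc c x + ⨅ α, V α (f i x) ≤ c x + V β (f i x) := by
        gcongr
        exact ciInf_le (Finite.bddBelow_range _) β
    _ ≤ V α x := hineq α β i hβ x

open Finset in
theorem sum_range_traj_add_le {n M : ℕ} {f : Fin M → (Fin n → ℝ) → (Fin n → ℝ)}
    {c W : (Fin n → ℝ) → ℝ} (hdiss : ∀ i x, c x + W (f i x) ≤ W x)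
    (σ : ℕ → Fin M) (x : Fin n → ℝ) (N : ℕ) :
    ∑ k ∈ range N, c (traj f σ x k) + W (traj f σ x N) ≤ W x := by
  induction N with
  | zero => simp [traj]
  | succ N ih =>
    have hstep := hdiss (σ N) (traj f σ x N)
    rw [sum_range_succ]
    simp only [traj]
    linarith

theorem valueFun_le_ofReal_of_storage {n M : ℕ} {f : Fin M → (Fin n → ℝ) → (Fin n → ℝ)}
    {c W : (Fin n → ℝ) → ℝ} (hc : ∀ x, 0 ≤ c x) (hW : ∀ x, 0 ≤ W x)
    (hdiss : ∀ i x, c x + W (f i x) ≤ W x) (x : Fin n → ℝ) :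
    valueFun f c x ≤ ENNReal.ofReal (W x) := by
  refine iSup_le fun σ => ENNReal.tsum_le_of_sum_range_le fun N => ?_
  rw [← ENNReal.ofReal_sum_of_nonneg fun k _ => hc _]
  refine ENNReal.ofReal_le_ofReal ?_
  linarith [sum_range_traj_add_le hdiss σ x N, hW (traj f σ x N)]

theorem stmt_3 {n M : ℕ} (hM : 0 < M) {S : Type} [Fintype S] [Nonempty S]
    (Eset : Set (S × S × Fin M))
    (hcomplete : ∀ (α : S) (i : Fin M), ∃ β : S, (α, β, i) ∈ Eset)
    (f : Fin M → (Fin n → ℝ) → (Fin n → ℝ))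
    (c : (Fin n → ℝ) → ℝ) (hc : ∀ x, 0 ≤ c x)
    (V : S → (Fin n → ℝ) → ℝ) (hV : ∀ α x, 0 ≤ V α x)
    (hineq : ∀ (α β : S) (i : Fin M), (α, β, i) ∈ Eset →
      ∀ x : Fin n → ℝ, c x + V β (f i x) ≤ V α x) :
    (∀ x : Fin n → ℝ,
      c x + (⨆ i : Fin M, ⨅ α : S, V α (f i x)) ≤ ⨅ α : S, V α x) ∧
    (∀ x : Fin n → ℝ, valueFun f c x ≤ ENNReal.ofReal (⨅ α : S, V α x)) := by
  have : Nonempty (Fin M) := ⟨⟨0, hM⟩⟩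
  have hdiss := add_iInf_le_iInf_of_complete hcomplete hineq
  refine ⟨fun x => ?_, valueFun_le_ofReal_of_storage hc (fun x => le_ciInf (hV · x)) hdiss⟩
  have hsup : ⨆ i, ⨅ α, V α (f i x) ≤ (⨅ α, V α x) - c x :=
    ciSup_le fun i => le_sub_iff_add_le'.mpr (hdiss i x)
  linarith
end

section
/- Let G = (S, E) be a directed labeled graph that is co-complete for ⟨M⟩ (every node β and label i has an incoming edge (α,β,i) ∈ E for some α). If nonnegative functions {V_α}_{α∈S} satisfy V_α(x) ≥ c(x) + V_β(f_i(x)) for all x and all edges (α,β,i) ∈ E, then V(x) := max_{α∈S} V_α(x) satisfies V(x) ≥ c(x) + max_{i∈⟨M⟩} V(f_i(x)) for all x, and consequently V(x) ≥ J(x) for all x. -/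
/-!
Co-completeness lets every node `β` and mode `i` be reached by an edge `(α, β, i)`, so each
`V β (f i x)` is bounded by `V α x - c x` for some `α`; hence `W := max_α V_α` satisfies the
Bellman inequality `c x + W (f i x) ≤ W x` for every mode. Telescoping it along any trajectory
bounds each partial cost sum by `W x`, and `W ≥ 0` lets the remainder term be dropped.
-/

open scoped ENNReal

def IsCoComplete {S ι : Type*} (E : Set (S × S × ι)) : Prop :=
  ∀ (β : S) (i : ι), ∃ α : S, (α, β, i) ∈ E

section MaxOfFamily

variable {S ι X : Type*}

theorem add_iSup_iSup_le_iSup_of_isCoComplete [Finite S] [Nonempty S] [Nonempty ι]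
    {E : Set (S × S × ι)} (hE : IsCoComplete E) (f : ι → X → X) (c : X → ℝ) (V : S → X → ℝ)
    (hV : ∀ α β i, (α, β, i) ∈ E → ∀ x, c x + V β (f i x) ≤ V α x) (x : X) :
    c x + ⨆ i, ⨆ β, V β (f i x) ≤ ⨆ α, V α x := by
  rw [add_comm, ← le_sub_iff_add_le]
  refine ciSup_le fun i => ciSup_le fun β => le_sub_iff_add_le.2 ?_
  obtain ⟨α, hα⟩ := hE β i
  rw [add_comm]
  exact le_ciSup_of_le (Finite.bddAbove_range _) α (hV α β i hα x)

theorem add_iSup_le_iSup_of_forall_add_iSup_le [Finite ι] {f : ι → X → X} {c : X → ℝ}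
    {V : S → X → ℝ} (h : ∀ x, c x + ⨆ i, ⨆ β, V β (f i x) ≤ ⨆ α, V α x) (i : ι) (x : X) :
    c x + ⨆ β, V β (f i x) ≤ ⨆ α, V α x :=
  (add_le_add_right (le_ciSup (Finite.bddAbove_range _) i) _).trans (h x)

theorem iSup_nonneg_of_forall_nonneg [Finite S] [Nonempty S] {V : S → X → ℝ}
    (hV : ∀ α x, 0 ≤ V α x) (x : X) :
    0 ≤ ⨆ α, V α x :=
  le_ciSup_of_le (Finite.bddAbove_range _) (Classical.arbitrary S) (hV _ x)

end MaxOfFamily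

section ValueFunction

variable {n M : ℕ} {f : Fin M → (Fin n → ℝ) → (Fin n → ℝ)} {c : (Fin n → ℝ) → ℝ}
  {W : (Fin n → ℝ) → ℝ}

theorem sum_range_add_le_of_forall_add_le (hW : ∀ i x, c x + W (f i x) ≤ W x)
    (σ : ℕ → Fin M) (x : Fin n → ℝ) (N : ℕ) :
    ∑ k ∈ Finset.range N, c (traj f σ x k) + W (traj f σ x N) ≤ W x := by
  induction N with
  | zero => simp [traj]
  | succ N ih =>
    rw [Finset.sum_range_succ, add_assoc]
    exact (add_le_add_right (hW (σ N) _) _).trans ih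

theorem valueFun_le_ofReal_of_forall_add_le (hc : ∀ x, 0 ≤ c x) (hW₀ : ∀ x, 0 ≤ W x)
    (hW : ∀ i x, c x + W (f i x) ≤ W x) (x : Fin n → ℝ) :
    valueFun f c x ≤ ENNReal.ofReal (W x) := by
  refine iSup_le fun σ => ?_
  rw [ENNReal.tsum_eq_iSup_nat]
  refine iSup_le fun N => ?_
  rw [← ENNReal.ofReal_sum_of_nonneg fun k _ => hc _]
  exact ENNReal.ofReal_le_ofReal <|
    (le_add_of_nonneg_right (hW₀ _)).trans (sum_range_add_le_of_forall_add_le hW σ x N)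

end ValueFunction

theorem stmt_4 {n M : ℕ} (hM : 0 < M) {S : Type} [Fintype S] [Nonempty S]
    (Eset : Set (S × S × Fin M))
    (hcocomplete : ∀ (β : S) (i : Fin M), ∃ α : S, (α, β, i) ∈ Eset)
    (f : Fin M → (Fin n → ℝ) → (Fin n → ℝ))
    (c : (Fin n → ℝ) → ℝ) (hc : ∀ x, 0 ≤ c x)
    (V : S → (Fin n → ℝ) → ℝ) (hV : ∀ α x, 0 ≤ V α x)
    (hineq : ∀ (α β : S) (i : Fin M), (α, β, i) ∈ Eset →
      ∀ x : Fin n → ℝ, c x + V β (f i x) ≤ V α x) :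
    (∀ x : Fin n → ℝ,
      c x + (⨆ i : Fin M, ⨆ α : S, V α (f i x)) ≤ ⨆ α : S, V α x) ∧
    (∀ x : Fin n → ℝ, valueFun f c x ≤ ENNReal.ofReal (⨆ α : S, V α x)) := by
  have : Nonempty (Fin M) := ⟨⟨0, hM⟩⟩
  have hBellman := add_iSup_iSup_le_iSup_of_isCoComplete hcocomplete f c V hineq
  exact ⟨hBellman, valueFun_le_ofReal_of_forall_add_le hc (iSup_nonneg_of_forall_nonneg hV)
    (add_iSup_le_iSup_of_forall_add_iSup_le hBellman)⟩
end

section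
/- Let {V_α}_{α∈S} be nonnegative functions, c a cost, f_1,…,f_M maps, and μ ≥ 1. Suppose there exist nonnegative multipliers t_{γ,α,i,β,j} ≥ 0 such that for all x ∈ ℝⁿ and all (γ,α,i) ∈ S×S×⟨M⟩: V_γ(x) ≤ μc(x) + V_α(f_i(x)) + ∑_{(β,j)} t_{γ,α,i,β,j}·(V_β(f_j(x)) − V_α(f_i(x))). Then V(x) := max_{α∈S} V_α(x) satisfies V(x) ≤ μc(x) + max_{i∈⟨M⟩} V(f_i(x)) for all x. -/
/-!
At a point `x`, pick a pair `(i, α)` maximizing `V α (f i x)`. With this choice every term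
`t γ α i β j * (V β (f j x) - V α (f i x))` of the certificate is nonpositive, so the certificate
bounds each `V γ x` by `μ * c x + V α (f i x)`, which is at most the right-hand side.
-/

theorem le_add_ciSup_of_forall_le_add_sum_mul_sub {ι : Type*} [Fintype ι] [Nonempty ι]
    {g : ι → ℝ} {a b : ℝ} {t : ι → ι → ℝ} (ht : ∀ k j, 0 ≤ t k j)
    (h : ∀ k, a ≤ b + g k + ∑ j, t k j * (g j - g k)) :
    a ≤ b + ⨆ j, g j := by
  obtain ⟨k, hk⟩ := Finite.exists_max g
  have hsum : ∑ j, t k j * (g j - g k) ≤ 0 :=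
    Finset.sum_nonpos fun j _ => mul_nonpos_of_nonneg_of_nonpos (ht k j) (sub_nonpos.2 (hk j))
  calc a ≤ b + g k := by linarith [h k]
    _ ≤ b + ⨆ j, g j := add_le_add_right (le_ciSup (Finite.bddAbove_range g) k) b

theorem stmt_13_general {n M : ℕ} (hM : 0 < M) {S : Type} [Fintype S] [Nonempty S]
    (f : Fin M → (Fin n → ℝ) → (Fin n → ℝ))
    (c : (Fin n → ℝ) → ℝ)
    (V : S → (Fin n → ℝ) → ℝ)
    (μ : ℝ)
    (t : S → S → Fin M → S → Fin M → ℝ)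
    (ht : ∀ γ α i β j, 0 ≤ t γ α i β j)
    (hcert : ∀ (x : Fin n → ℝ) (γ α : S) (i : Fin M),
      V γ x ≤ μ * c x + V α (f i x) +
        ∑ β : S, ∑ j : Fin M, t γ α i β j * (V β (f j x) - V α (f i x))) :
    ∀ x : Fin n → ℝ,
      (⨆ α : S, V α x) ≤ μ * c x + ⨆ i : Fin M, ⨆ α : S, V α (f i x) := by
  intro x
  have : Nonempty (Fin M) := ⟨⟨0, hM⟩⟩
  rw [← Finite.ciSup_prod fun p : Fin M × S => V p.2 (f p.1 x)]
  refine ciSup_le fun γ => le_add_ciSup_of_forall_le_add_sum_mul_sub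
    (t := fun p q => t γ p.2 p.1 q.2 q.1) (fun _ _ => ht _ _ _ _ _) fun p => ?_
  simpa only [Fintype.sum_prod_type_right] using hcert x γ p.2 p.1

theorem stmt_13 {n M : ℕ} (hM : 0 < M) {S : Type} [Fintype S] [Nonempty S]
    (f : Fin M → (Fin n → ℝ) → (Fin n → ℝ))
    (c : (Fin n → ℝ) → ℝ) (hc : ∀ x, 0 ≤ c x)
    (V : S → (Fin n → ℝ) → ℝ) (hV : ∀ α x, 0 ≤ V α x)
    (μ : ℝ) (hμ : 1 ≤ μ)
    (t : S → S → Fin M → S → Fin M → ℝ)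
    (ht : ∀ γ α i β j, 0 ≤ t γ α i β j)
    (hcert : ∀ (x : Fin n → ℝ) (γ α : S) (i : Fin M),
      V γ x ≤ μ * c x + V α (f i x) +
        ∑ β : S, ∑ j : Fin M, t γ α i β j * (V β (f j x) - V α (f i x))) :
    ∀ x : Fin n → ℝ,
      (⨆ α : S, V α x) ≤ μ * c x + ⨆ i : Fin M, ⨆ α : S, V α (f i x) :=
  stmt_13_general hM f c V μ t ht hcert
end

section
/- Let {V_α}_{α∈S} be nonnegative functions, c a cost, f_1,…,f_M maps, and μ ≥ 1. Suppose there exist nonnegative multipliers s_{γ,α,i,ω,ζ} ≥ 0 and t_{γ,α,i,ω,j} ≥ 0 (indexed by γ,α ∈ S, i ∈ ⟨M⟩, ω ∈ S^M, ζ ∈ S, j ∈ ⟨M⟩) such that for all x and all (γ,α,i,ω): V_γ(x) + ∑_ζ s_{γ,α,i,ω,ζ}(V_ζ(x) − V_γ(x)) ≤ μc(x) + V_α(f_i(x)) + ∑_j t_{γ,α,i,ω,j}(V_{ω_j}(f_j(x)) − V_α(f_i(x))). Then V(x) := min_{α∈S} V_α(x) satisfies V(x) ≤ μc(x) + max_{i∈⟨M⟩}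 V(f_i(x)) for all x. -/
/-!
Fix `x`, let `γ` attain `min_α V_α x`, let each `ω_j` attain `min_α V_α (f_j x)`, and let `i`
attain the maximum over `j` of these minima. At this `(γ, ω_i, i, ω)` every `s`-term of the
certificate is nonnegative (`γ` is a minimiser) and every `t`-term is nonpositive (`i` is a
maximiser), so the certificate collapses to `V_γ x ≤ μ c x + V_{ω_i} (f_i x)`, which is the claim.
-/

open Finset

lemma sum_mul_sub_nonneg_of_forall_le {ι : Type*} [Fintype ι] {a v : ι → ℝ} {k : ι}
    (ha : ∀ i, 0 ≤ a i) (hk : ∀ i, v k ≤ v i) : 0 ≤ ∑ i, a i * (v i - v k) :=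
  sum_nonneg fun i _ => mul_nonneg (ha i) (sub_nonneg.2 (hk i))

lemma sum_mul_sub_nonpos_of_forall_le {ι : Type*} [Fintype ι] {a v : ι → ℝ} {k : ι}
    (ha : ∀ i, 0 ≤ a i) (hk : ∀ i, v i ≤ v k) : ∑ i, a i * (v i - v k) ≤ 0 :=
  sum_nonpos fun i _ => mul_nonpos_of_nonneg_of_nonpos (ha i) (sub_nonpos.2 (hk i))

theorem ciInf_le_add_ciSup_ciInf_of_certificate {X S ι : Type*} [Fintype S] [Nonempty S]
    [Fintype ι] [Nonempty ι] (f : ι → X → X) (c : X → ℝ) (V : S → X → ℝ)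
    (s : S → S → ι → (ι → S) → S → ℝ) (t : S → S → ι → (ι → S) → ι → ℝ)
    (hs : ∀ γ α i ω ζ, 0 ≤ s γ α i ω ζ) (ht : ∀ γ α i ω j, 0 ≤ t γ α i ω j)
    (hcert : ∀ x γ α i ω,
      V γ x + ∑ ζ, s γ α i ω ζ * (V ζ x - V γ x) ≤
        c x + V α (f i x) + ∑ j, t γ α i ω j * (V (ω j) (f j x) - V α (f i x)))
    (x : X) : ⨅ α, V α x ≤ c x + ⨆ i, ⨅ α, V α (f i x) := by
  obtain ⟨γ, hγ⟩ := exists_eq_ciInf_of_finite (f := fun α => V α x)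
  choose ω hω using fun j : ι => exists_eq_ciInf_of_finite (f := fun α => V α (f j x))
  obtain ⟨i, hi⟩ := exists_eq_ciSup_of_finite (f := fun j => ⨅ α, V α (f j x))
  have hγ_min : ∀ ζ, V γ x ≤ V ζ x := fun ζ => hγ ▸ ciInf_le (Finite.bddBelow_range _) ζ
  have hi_max : ∀ j, V (ω j) (f j x) ≤ V (ω i) (f i x) := fun j => by
    rw [hω, hω, hi]
    exact le_ciSup (Finite.bddAbove_range fun j => ⨅ α, V α (f j x)) j
  calc ⨅ α, V α x
      = V γ x := hγ.symm
    _ ≤ V γ x + ∑ ζ, s γ (ω i) i ω ζ * (V ζ x - V γ x) :=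
        le_add_of_nonneg_right (sum_mul_sub_nonneg_of_forall_le (hs _ _ _ _) hγ_min)
    _ ≤ c x + V (ω i) (f i x) + ∑ j, t γ (ω i) i ω j * (V (ω j) (f j x) - V (ω i) (f i x)) :=
        hcert x γ (ω i) i ω
    _ ≤ c x + V (ω i) (f i x) :=
        add_le_of_nonpos_right (sum_mul_sub_nonpos_of_forall_le (ht _ _ _ _) hi_max)
    _ = c x + ⨆ j, ⨅ α, V α (f j x) := by rw [hω, hi]

theorem stmt_14_general {n M : ℕ} (hM : 0 < M) {S : Type} [Fintype S] [Nonempty S]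
    (f : Fin M → (Fin n → ℝ) → (Fin n → ℝ))
    (c : (Fin n → ℝ) → ℝ)
    (V : S → (Fin n → ℝ) → ℝ)
    (μ : ℝ)
    (s : S → S → Fin M → (Fin M → S) → S → ℝ)
    (t : S → S → Fin M → (Fin M → S) → Fin M → ℝ)
    (hs : ∀ γ α i ω ζ, 0 ≤ s γ α i ω ζ)
    (ht : ∀ γ α i ω j, 0 ≤ t γ α i ω j)
    (hcert : ∀ (x : Fin n → ℝ) (γ α : S) (i : Fin M) (ω : Fin M → S),
      V γ x + ∑ ζ : S, s γ α i ω ζ * (V ζ x - V γ x) ≤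
        μ * c x + V α (f i x) +
          ∑ j : Fin M, t γ α i ω j * (V (ω j) (f j x) - V α (f i x))) :
    ∀ x : Fin n → ℝ,
      (⨅ α : S, V α x) ≤ μ * c x + ⨆ i : Fin M, ⨅ α : S, V α (f i x) :=
  have : Nonempty (Fin M) := ⟨⟨0, hM⟩⟩
  ciInf_le_add_ciSup_ciInf_of_certificate f (fun x => μ * c x) V s t hs ht hcert

theorem stmt_14 {n M : ℕ} (hM : 0 < M) {S : Type} [Fintype S] [Nonempty S]
    (f : Fin M → (Fin n → ℝ) → (Fin n → ℝ))
    (c : (Fin n → ℝ) → ℝ) (hc : ∀ x, 0 ≤ c x)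
    (V : S → (Fin n → ℝ) → ℝ) (hV : ∀ α x, 0 ≤ V α x)
    (μ : ℝ) (hμ : 1 ≤ μ)
    (s : S → S → Fin M → (Fin M → S) → S → ℝ)
    (t : S → S → Fin M → (Fin M → S) → Fin M → ℝ)
    (hs : ∀ γ α i ω ζ, 0 ≤ s γ α i ω ζ)
    (ht : ∀ γ α i ω j, 0 ≤ t γ α i ω j)
    (hcert : ∀ (x : Fin n → ℝ) (γ α : S) (i : Fin M) (ω : Fin M → S),
      V γ x + ∑ ζ : S, s γ α i ω ζ * (V ζ x - V γ x) ≤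
        μ * c x + V α (f i x) +
          ∑ j : Fin M, t γ α i ω j * (V (ω j) (f j x) - V α (f i x))) :
    ∀ x : Fin n → ℝ,
      (⨅ α : S, V α x) ≤ μ * c x + ⨆ i : Fin M, ⨅ α : S, V α (f i x) :=
  stmt_14_general hM f c V μ s t hs ht hcert
end

section
/- If V : ℝⁿ → ℝ≥0 satisfies V(x) ≤ μc(x) + max_i V(f_i(x)) for all x with μ ≥ 1, V is continuous at 0 with V(0)=0, and every trajectory converges to 0, then (1/μ)V satisfies the lower DP inequality W(x) ≤ c(x) + max_i W(f_i(x)), hence (1/μ)V(x) ≤ J(x) for all x. -/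
open scoped ENNReal
open Filter

theorem stmt_15 {n M : ℕ} (hM : 0 < M)
    (f : Fin M → (Fin n → ℝ) → (Fin n → ℝ))
    (c V : (Fin n → ℝ) → ℝ)
    (hc : ∀ x, 0 ≤ c x) (hV : ∀ x, 0 ≤ V x)
    (μ : ℝ) (hμ : 1 ≤ μ)
    (hcert : ∀ x : Fin n → ℝ, V x ≤ μ * c x + ⨆ i : Fin M, V (f i x))
    (hcont : ContinuousAt V 0) (hV0 : V 0 = 0)
    (hstab : ∀ (σ : ℕ → Fin M) (x : Fin n → ℝ),
      Tendsto (traj f σ x) atTop (nhds 0)) :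
    (∀ x : Fin n → ℝ, V x / μ ≤ c x + ⨆ i : Fin M, V (f i x) / μ) ∧
    (∀ x : Fin n → ℝ, ENNReal.ofReal (V x / μ) ≤ valueFun f c x) := by
  haveI : Nonempty (Fin M) := ⟨⟨0, hM⟩⟩
  have hμ0 : 0 < μ := lt_of_lt_of_le one_pos hμ
  -- greedy argmax selector
  have hpick : ∀ z : Fin n → ℝ, ∃ i : Fin M, ∀ j, V (f j z) ≤ V (f i z) := fun z =>
    Finite.exists_max fun i => V (f i z)
  choose g hg using hpick
  have hsup_le : ∀ z, (⨆ i : Fin M, V (f i z)) ≤ V (f (g z) z) := fun z =>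
    ciSup_le (hg z)
  have hstep : ∀ z, V z ≤ μ * c z + V (f (g z) z) := fun z =>
    (hcert z).trans (by linarith [hsup_le z])
  constructor
  · intro x
    have h1 : V x / μ ≤ c x + (⨆ i : Fin M, V (f i x)) / μ := by
      rw [div_le_iff₀ hμ0, add_mul, div_mul_cancel₀ _ (ne_of_gt hμ0), mul_comm (c x) μ]
      exact hcert x
    refine h1.trans (add_le_add (le_refl _) ?_)
    calc (⨆ i : Fin M, V (f i x)) / μ ≤ V (f (g x) x) / μ := by
          gcongr; exact hsup_le x
      _ ≤ ⨆ i : Fin M, V (f i x) / μ :=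
          le_ciSup (f := fun i : Fin M => V (f i x) / μ)
            (Set.Finite.bddAbove (Set.finite_range _)) (g x)
  · intro x
    -- greedy trajectory
    let y : ℕ → (Fin n → ℝ) := fun k => Nat.rec x (fun _ z => f (g z) z) k
    let σ : ℕ → Fin M := fun k => g (y k)
    have hy : ∀ k, traj f σ x k = y k := by
      intro k
      induction k with
      | zero => rfl
      | succ k ih => simp only [traj, ih]; rfl
    -- telescoping
    have hsum : ∀ N, V x ≤ μ * ∑ k ∈ Finset.range N, c (y k) + V (y N) := by
      intro N
      induction N with
      | zero => simp; exact le_refl _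
      | succ N ih =>
        have h := hstep (y N)
        rw [Finset.sum_range_succ, mul_add]
        have : V (f (g (y N)) (y N)) = V (y (N + 1)) := rfl
        linarith [this ▸ h]
    set T : ℝ≥0∞ := ∑' k : ℕ, ENNReal.ofReal (c (traj f σ x k)) with hT
    have key : ∀ N, ENNReal.ofReal (V x / μ) ≤ T + ENNReal.ofReal (V (y N) / μ) := by
      intro N
      have hr : V x / μ ≤ (∑ k ∈ Finset.range N, c (y k)) + V (y N) / μ := by
        rw [div_le_iff₀ hμ0, add_mul, div_mul_cancel₀ _ (ne_of_gt hμ0), mul_comm]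
        exact (hsum N).trans (by ring_nf; exact le_refl _)
      calc ENNReal.ofReal (V x / μ)
          ≤ ENNReal.ofReal ((∑ k ∈ Finset.range N, c (y k)) + V (y N) / μ) :=
            ENNReal.ofReal_le_ofReal hr
        _ = ENNReal.ofReal (∑ k ∈ Finset.range N, c (y k))
            + ENNReal.ofReal (V (y N) / μ) :=
            ENNReal.ofReal_add (Finset.sum_nonneg fun k _ => hc _)
              (div_nonneg (hV _) hμ0.le)
        _ ≤ T + ENNReal.ofReal (V (y N) / μ) := by
            gcongr
            rw [hT]
            calc ENNReal.ofReal (∑ k ∈ Finset.range N, c (y k))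
                = ∑ k ∈ Finset.range N, ENNReal.ofReal (c (y k)) :=
                  ENNReal.ofReal_sum_of_nonneg fun k _ => hc _
              _ = ∑ k ∈ Finset.range N, ENNReal.ofReal (c (traj f σ x k)) := by
                  refine Finset.sum_congr rfl fun k _ => by rw [hy k]
              _ ≤ _ := ENNReal.sum_le_tsum _
    have hy_tendsto : Tendsto y atTop (nhds 0) := by
      have := hstab σ x
      rwa [show traj f σ x = y from funext hy] at this
    have hVy : Tendsto (fun N => ENNReal.ofReal (V (y N) / μ)) atTop (nhds 0) := by
      have h1 : Tendsto (fun N => V (y N)) atTop (nhds 0) := by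
        have := hcont.tendsto.comp hy_tendsto
        rwa [hV0] at this
      have h2 : Tendsto (fun N => V (y N) / μ) atTop (nhds 0) := by
        simpa using h1.div_const μ
      simpa using (ENNReal.tendsto_ofReal h2)
    have hlim : Tendsto (fun N => T + ENNReal.ofReal (V (y N) / μ)) atTop (nhds T) := by
      simpa using (tendsto_const_nhds.add hVy)
    have hle : ENNReal.ofReal (V x / μ) ≤ T := ge_of_tendsto' hlim key
    exact hle.trans (le_iSup (fun σ' : ℕ → Fin M =>
      ∑' k : ℕ, ENNReal.ofReal (c (traj f σ' x k))) σ)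
end

section
/- Controller synthesis upper bound: let G = (S,E) be complete for ⟨M⟩, and suppose functions {V_α}_{α∈S} ⊆ ℝⁿ→ℝ≥0 and gains {K_α}_{α∈S} ⊆ ℝ^{m×n} satisfy V_α(x) ≥ c̃(x, K_αx) + V_β(A_i x + B_i K_α x) for all x and all (α,β,i) ∈ E. Define V(x) = min_{α∈S} V_α(x) and the policy φ(x) = K_{κ(x)}x where κ(x) ∈ argmin_α V_α(x). Then V(x) ≥ c(x) + max_{i∈⟨M⟩} V(A_i x + B_i φ(x)) for all x, where c(x) = c̃(x, φ(x)); consequently V(x) ≥ J^φ(x) ≥ J*(x). -/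
/-!
Along any trajectory of the closed loop, the Bellman-type inequality `c y + W (f i y) ≤ W y`
telescopes to `∑_{k<N} c(x_k) + W(x_N) ≤ W(x_0)`, so `W ≥ 0` bounds every partial sum of the cost
and hence the worst-case value function. The inequality holds for `W = min_α V_α` under the policy
`κ`: from `x`, the mode `κ x` realizes `W x`, and completeness of the graph supplies, for every
switching signal `i`, an edge `(κ x, β, i)` whose inequality bounds `W` at the successor by `V_β`.
-/

open scoped ENNReal
open Filter

open Matrix Set

theorem ciInf_eq_of_forall_le {α ι : Type*} [ConditionallyCompleteLattice α] {f : ι → α} {i : ι}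
    (h : ∀ j, f i ≤ f j) : ⨅ j, f j = f i :=
  IsLeast.csInf_eq ⟨⟨i, rfl⟩, forall_mem_range.2 h⟩

theorem add_iInf_le_iInf_of_edges {X S ι : Type*} {V : S → X → ℝ} {κ : X → S}
    {E : Set (S × S × ι)} (hcomplete : ∀ α i, ∃ β, (α, β, i) ∈ E)
    (c : S → X → ℝ) (g : S → ι → X → X)
    (hineq : ∀ α β i, (α, β, i) ∈ E → ∀ x, c α x + V β (g α i x) ≤ V α x)
    (hκ : ∀ x α, V (κ x) x ≤ V α x) (x : X) (i : ι) :
    c (κ x) x + ⨅ α, V α (g (κ x) i x) ≤ ⨅ α, V α x := by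
  have hmin y : ⨅ α, V α y = V (κ y) y := ciInf_eq_of_forall_le (f := (V · y)) (hκ y)
  obtain ⟨β, hβ⟩ := hcomplete (κ x) i
  calc c (κ x) x + ⨅ α, V α (g (κ x) i x)
      ≤ c (κ x) x + V β (g (κ x) i x) := by gcongr; exact (hmin _).trans_le (hκ _ β)
    _ ≤ V (κ x) x := hineq _ _ _ hβ x
    _ = ⨅ α, V α x := (hmin x).symm

section ValueFunBound

variable {n M : ℕ} {f : Fin M → (Fin n → ℝ) → (Fin n → ℝ)} {c W : (Fin n → ℝ) → ℝ}

theorem sum_range_add_le_of_bellman (hW : ∀ i y, c y + W (f i y) ≤ W y)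
    (σ : ℕ → Fin M) (x : Fin n → ℝ) (N : ℕ) :
    ∑ k ∈ Finset.range N, c (traj f σ x k) + W (traj f σ x N) ≤ W x := by
  induction N with
  | zero => simp [traj]
  | succ N ih =>
    rw [Finset.sum_range_succ, traj]
    linarith [hW (σ N) (traj f σ x N)]

theorem valueFun_le_ofReal_of_bellman (hc : ∀ y, 0 ≤ c y) (hW₀ : ∀ y, 0 ≤ W y)
    (hW : ∀ i y, c y + W (f i y) ≤ W y) (x : Fin n → ℝ) :
    valueFun f c x ≤ ENNReal.ofReal (W x) := by
  refine iSup_le fun σ => ENNReal.tsum_le_of_sum_range_le fun N => ?_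
  rw [← ENNReal.ofReal_sum_of_nonneg fun k _ => hc _]
  exact ENNReal.ofReal_le_ofReal <| by
    linarith [sum_range_add_le_of_bellman hW σ x N, hW₀ (traj f σ x N)]

end ValueFunBound

theorem stmt_17_general {n m M : ℕ} (hM : 0 < M) {S : Type}
    (Eset : Set (S × S × Fin M))
    (hcomplete : ∀ (α : S) (i : Fin M), ∃ β : S, (α, β, i) ∈ Eset)
    (A : Fin M → Matrix (Fin n) (Fin n) ℝ)
    (B : Fin M → Matrix (Fin n) (Fin m) ℝ)
    (ct : (Fin n → ℝ) → (Fin m → ℝ) → ℝ) (hct : ∀ x u, 0 ≤ ct x u)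
    (V : S → (Fin n → ℝ) → ℝ) (hV : ∀ α x, 0 ≤ V α x)
    (K : S → Matrix (Fin m) (Fin n) ℝ)
    (hineq : ∀ (α β : S) (i : Fin M), (α, β, i) ∈ Eset → ∀ x : Fin n → ℝ,
      ct x (K α *ᵥ x) + V β (A i *ᵥ x + B i *ᵥ (K α *ᵥ x)) ≤ V α x)
    (κ : (Fin n → ℝ) → S) (hκ : ∀ (x : Fin n → ℝ) (α : S), V (κ x) x ≤ V α x) :
    (∀ x : Fin n → ℝ,
      ct x (K (κ x) *ᵥ x) +
          (⨆ i : Fin M, ⨅ α : S, V α (A i *ᵥ x + B i *ᵥ (K (κ x) *ᵥ x)))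
        ≤ ⨅ α : S, V α x) ∧
    (∀ x : Fin n → ℝ,
      valueFun (fun i y => A i *ᵥ y + B i *ᵥ (K (κ y) *ᵥ y))
          (fun y => ct y (K (κ y) *ᵥ y)) x
        ≤ ENNReal.ofReal (⨅ α : S, V α x)) ∧
    (∀ x : Fin n → ℝ,
      (⨅ φ : (Fin n → ℝ) → (Fin m → ℝ),
          valueFun (fun i y => A i *ᵥ y + B i *ᵥ φ y) (fun y => ct y (φ y)) x)
        ≤ valueFun (fun i y => A i *ᵥ y + B i *ᵥ (K (κ y) *ᵥ y))
            (fun y => ct y (K (κ y) *ᵥ y)) x) := by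
  have : Nonempty (Fin M) := Fin.pos_iff_nonempty.mp hM
  have bellman := add_iInf_le_iInf_of_edges hcomplete (fun α x => ct x (K α *ᵥ x))
    (fun α i x => A i *ᵥ x + B i *ᵥ (K α *ᵥ x)) hineq hκ
  refine ⟨fun x => ?_, fun x => ?_, fun x => iInf_le _ fun y => K (κ y) *ᵥ y⟩
  · rw [add_comm, ← le_sub_iff_add_le]
    exact ciSup_le fun i => le_sub_iff_add_le'.2 (bellman x i)
  · refine valueFun_le_ofReal_of_bellman (W := fun y => ⨅ α, V α y) (fun y => hct _ _)
      (fun y => ?_) (fun i y => bellman y i) x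
    exact (ciInf_eq_of_forall_le (f := (V · y)) (hκ y)).symm ▸ hV _ _

theorem stmt_17 {n m M : ℕ} (hM : 0 < M) {S : Type} [Fintype S] [Nonempty S]
    (Eset : Set (S × S × Fin M))
    (hcomplete : ∀ (α : S) (i : Fin M), ∃ β : S, (α, β, i) ∈ Eset)
    (A : Fin M → Matrix (Fin n) (Fin n) ℝ)
    (B : Fin M → Matrix (Fin n) (Fin m) ℝ)
    (ct : (Fin n → ℝ) → (Fin m → ℝ) → ℝ) (hct : ∀ x u, 0 ≤ ct x u)
    (V : S → (Fin n → ℝ) → ℝ) (hV : ∀ α x, 0 ≤ V α x)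
    (K : S → Matrix (Fin m) (Fin n) ℝ)
    (hineq : ∀ (α β : S) (i : Fin M), (α, β, i) ∈ Eset → ∀ x : Fin n → ℝ,
      ct x (K α *ᵥ x) + V β (A i *ᵥ x + B i *ᵥ (K α *ᵥ x)) ≤ V α x)
    (κ : (Fin n → ℝ) → S) (hκ : ∀ (x : Fin n → ℝ) (α : S), V (κ x) x ≤ V α x) :
    (∀ x : Fin n → ℝ,
      ct x (K (κ x) *ᵥ x) +
          (⨆ i : Fin M, ⨅ α : S, V α (A i *ᵥ x + B i *ᵥ (K (κ x) *ᵥ x)))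
        ≤ ⨅ α : S, V α x) ∧
    (∀ x : Fin n → ℝ,
      valueFun (fun i y => A i *ᵥ y + B i *ᵥ (K (κ y) *ᵥ y))
          (fun y => ct y (K (κ y) *ᵥ y)) x
        ≤ ENNReal.ofReal (⨅ α : S, V α x)) ∧
    (∀ x : Fin n → ℝ,
      (⨅ φ : (Fin n → ℝ) → (Fin m → ℝ),
          valueFun (fun i y => A i *ᵥ y + B i *ᵥ φ y) (fun y => ct y (φ y)) x)
        ≤ valueFun (fun i y => A i *ᵥ y + B i *ᵥ (K (κ y) *ᵥ y))
            (fun y => ct y (K (κ y) *ᵥ y)) x) :=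
  stmt_17_general hM Eset hcomplete A B ct hct V hV K hineq κ hκ
end

section
/- Monotonicity over De Bruijn graphs: let g_l denote the optimal value of the problem minimizing min_{α ∈ ⟨M⟩^l} x_0ᵀ P_α x_0 over families {(P_α, K_α)}_{α ∈ ⟨M⟩^l} subject to P_α ⪰ (Q + K_αᵀRK_α) + (A_i + B_iK_α)ᵀ P_β (A_i + B_iK_α) for all edges (α,β,i) of the De Bruijn graph H_l(M). Then g_{l+1} ≤ g_l for all l: any feasible solution for order l lifts, via the truncation map π : ⟨M⟩^{l+1} → ⟨M⟩^l removing the last symbol (so P_α^{l+1} := P^l_{π(α)}, K_α^{l+1} := K^l_{π(α)}), to a feasible solution for order l+1 with the same objective value. -/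
open scoped ENNReal
open Matrix

/-- Edge relation of the De Bruijn graph of order `l` on `⟨M⟩`: there is an edge
from `α = (j_1,…,j_l)` to `β = (i, j_1,…,j_{l−1})` with label `i`. -/
def deBruijnEdge {M l : ℕ} (α β : Fin l → Fin M) (i : Fin M) : Prop :=
  (∀ h : 0 < l, β ⟨0, h⟩ = i) ∧
  (∀ (k : ℕ) (h : k + 1 < l), β ⟨k + 1, h⟩ = α ⟨k, Nat.lt_of_succ_lt h⟩)

/-- Feasibility of `{(P_α, K_α)}_{α ∈ ⟨M⟩^l}` for the order-`l` synthesis problem: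
`P_α ⪰ 0` and the control LMIs hold along all edges of `H_l(M)`. -/
def DBFeasible {n m M : ℕ} (A : Fin M → Matrix (Fin n) (Fin n) ℝ)
    (B : Fin M → Matrix (Fin n) (Fin m) ℝ)
    (Q : Matrix (Fin n) (Fin n) ℝ) (R : Matrix (Fin m) (Fin m) ℝ) (l : ℕ)
    (P : (Fin l → Fin M) → Matrix (Fin n) (Fin n) ℝ)
    (K : (Fin l → Fin M) → Matrix (Fin m) (Fin n) ℝ) : Prop :=
  (∀ α : Fin l → Fin M, (P α).PosSemidef) ∧
  ∀ (α β : Fin l → Fin M) (i : Fin M), deBruijnEdge α β i →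
    (P α - (Q + (K α)ᵀ * R * K α)
      - (A i + B i * K α)ᵀ * P β * (A i + B i * K α)).PosSemidef

/-- Optimal value `g_l` of the pointwise synthesis problem (`∞` if infeasible). -/
noncomputable def gVal {n m M : ℕ} (A : Fin M → Matrix (Fin n) (Fin n) ℝ)
    (B : Fin M → Matrix (Fin n) (Fin m) ℝ)
    (Q : Matrix (Fin n) (Fin n) ℝ) (R : Matrix (Fin m) (Fin m) ℝ)
    (x₀ : Fin n → ℝ) (l : ℕ) : ℝ≥0∞ :=
  ⨅ (P : (Fin l → Fin M) → Matrix (Fin n) (Fin n) ℝ)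
    (K : (Fin l → Fin M) → Matrix (Fin m) (Fin n) ℝ)
    (_ : DBFeasible A B Q R l P K),
      ENNReal.ofReal (⨅ α : Fin l → Fin M, x₀ ⬝ᵥ (P α *ᵥ x₀))

/-! Truncating the last symbol, `Fin.init`, maps every edge `(α, β, i)` of the order-`l+1`
De Bruijn graph to an edge `(init α, init β, i)` of the order-`l` graph. Hence pulling a feasible
family back along `Fin.init` keeps every LMI, and since `Fin.init` is onto when the alphabet is
nonempty, the objective value is unchanged; so `g_{l+1} ≤ g_l`. -/

theorem Fin.init_surjective {α : Type*} [Nonempty α] {l : ℕ} :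
    Function.Surjective (Fin.init : (Fin (l + 1) → α) → Fin l → α) :=
  fun w => ⟨Fin.snoc w (Classical.arbitrary α), Fin.init_snoc _ _⟩

theorem deBruijnEdge.init {M l : ℕ} {α β : Fin (l + 1) → Fin M} {i : Fin M}
    (h : deBruijnEdge α β i) : deBruijnEdge (Fin.init α) (Fin.init β) i :=
  ⟨fun _ => h.1 l.succ_pos, fun k hk => h.2 k (Nat.lt_succ_of_lt hk)⟩

section

variable {n m M : ℕ} {A : Fin M → Matrix (Fin n) (Fin n) ℝ}
  {B : Fin M → Matrix (Fin n) (Fin m) ℝ} {Q : Matrix (Fin n) (Fin n) ℝ}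
  {R : Matrix (Fin m) (Fin m) ℝ}

theorem DBFeasible.comp_init {l : ℕ} {P : (Fin l → Fin M) → Matrix (Fin n) (Fin n) ℝ}
    {K : (Fin l → Fin M) → Matrix (Fin m) (Fin n) ℝ} (h : DBFeasible A B Q R l P K) :
    DBFeasible A B Q R (l + 1) (P ∘ Fin.init) (K ∘ Fin.init) :=
  ⟨fun _ => h.1 _, fun _ _ i he => h.2 _ _ i he.init⟩

theorem gVal_succ_le [NeZero M] (x₀ : Fin n → ℝ) (l : ℕ) :
    gVal A B Q R x₀ (l + 1) ≤ gVal A B Q R x₀ l := by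
  refine le_iInf₂ fun P K => le_iInf fun hPK => ?_
  rw [← Fin.init_surjective.iInf_comp fun α => x₀ ⬝ᵥ (P α *ᵥ x₀)]
  exact iInf₂_le_of_le (P ∘ Fin.init) (K ∘ Fin.init) (iInf_le_of_le hPK.comp_init le_rfl)

end

theorem stmt_18_general {n m M : ℕ} (hM : 0 < M)
    (A : Fin M → Matrix (Fin n) (Fin n) ℝ)
    (B : Fin M → Matrix (Fin n) (Fin m) ℝ)
    (Q : Matrix (Fin n) (Fin n) ℝ) (R : Matrix (Fin m) (Fin m) ℝ)
    (x₀ : Fin n → ℝ) :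
    (∀ (l : ℕ) (P : (Fin l → Fin M) → Matrix (Fin n) (Fin n) ℝ)
        (K : (Fin l → Fin M) → Matrix (Fin m) (Fin n) ℝ),
      DBFeasible A B Q R l P K →
        DBFeasible A B Q R (l + 1)
            (fun α => P (fun k : Fin l => α k.castSucc))
            (fun α => K (fun k : Fin l => α k.castSucc)) ∧
          (⨅ α : Fin (l + 1) → Fin M,
              x₀ ⬝ᵥ (P (fun k : Fin l => α k.castSucc) *ᵥ x₀))
            = ⨅ α : Fin l → Fin M, x₀ ⬝ᵥ (P α *ᵥ x₀)) ∧
    (∀ l : ℕ, gVal A B Q R x₀ (l + 1) ≤ gVal A B Q R x₀ l) := by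
  have : NeZero M := ⟨hM.ne'⟩
  refine ⟨fun l P K hPK => ⟨hPK.comp_init, ?_⟩, gVal_succ_le x₀⟩
  exact Fin.init_surjective.iInf_comp fun α => x₀ ⬝ᵥ (P α *ᵥ x₀)

theorem stmt_18 {n m M : ℕ} (hM : 0 < M)
    (A : Fin M → Matrix (Fin n) (Fin n) ℝ)
    (B : Fin M → Matrix (Fin n) (Fin m) ℝ)
    (Q : Matrix (Fin n) (Fin n) ℝ) (R : Matrix (Fin m) (Fin m) ℝ)
    (hQ : Q.PosDef) (hR : R.PosDef) (x₀ : Fin n → ℝ) :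
    (∀ (l : ℕ) (P : (Fin l → Fin M) → Matrix (Fin n) (Fin n) ℝ)
        (K : (Fin l → Fin M) → Matrix (Fin m) (Fin n) ℝ),
      DBFeasible A B Q R l P K →
        DBFeasible A B Q R (l + 1)
            (fun α => P (fun k : Fin l => α k.castSucc))
            (fun α => K (fun k : Fin l => α k.castSucc)) ∧
          (⨅ α : Fin (l + 1) → Fin M,
              x₀ ⬝ᵥ (P (fun k : Fin l => α k.castSucc) *ᵥ x₀))
            = ⨅ α : Fin l → Fin M, x₀ ⬝ᵥ (P α *ᵥ x₀)) ∧
    (∀ l : ℕ, gVal A B Q R x₀ (l + 1) ≤ gVal A B Q R x₀ l) :=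
  stmt_18_general hM A B Q R x₀
end
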